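/- Let s, y ∈ ℝⁿ satisfy sᵀy ≥ γ‖s‖² with γ > 0 and ‖y‖ ≤ L_y‖s‖ with L_y > 0, let μ > 0, ρ = 1/(sᵀy), V = I − ρ s yᵀ, and A = μVVᵀ + ρ s sᵀ. Then λ_max(A) ≤ 1/γ + max(0, (μ/γ²)L_y² − μ/(1 + (μ/γ)L_y²)). -/

import Mathlib

/-!
Write `a = sᵀw`, `b = yᵀw` for an eigenvector `A w = ν w`. Pairing the eigen-equation with `y`
and with `s`, and using `ρ sᵀy = 1`, gives `ν b = a` and
`ν a = ρ‖s‖² ((1 + μρ‖y‖²) a - μ b)`. So either `a = 0`, which forces `A w = μ w`, or `ν` is a root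
of `ν² - T ν + D` with `σ = ρ‖s‖²`, `τ = ρ‖y‖²`, `T = σ(1 + μτ)`, `D = μσ`. Every root is at most
`T - D/T = σ(1 + μτ) - μ/(1 + μτ)`, and so is `μ` because `στ ≥ 1` by Cauchy–Schwarz. This bound is
increasing in `σ` and `τ`, and the hypotheses give `σ ≤ 1/γ` and `τ ≤ L_y²/γ`.
-/

open Matrix
open scoped Matrix

section Quadratic

variable {K : Type*} [Field K] [LinearOrder K] [IsStrictOrderedRing K]

theorem le_sub_div_of_sq_sub_mul_add_eq_zero {T D ν : K} (hT : 0 < T)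
    (h : ν ^ 2 - T * ν + D = 0) : ν ≤ T - D / T := by
  have hsq : T - D / T - ν = (T - ν) ^ 2 / T := by
    rw [eq_div_iff hT.ne', sub_mul, sub_mul, div_mul_cancel₀ _ hT.ne']
    linear_combination -h
  linarith [div_nonneg (sq_nonneg (T - ν)) hT.le]

def bfgsSpectralBound (μ σ τ : K) : K := σ * (1 + μ * τ) - μ / (1 + μ * τ)

theorem le_bfgsSpectralBound {μ σ τ ν : K} (hμ : 0 ≤ μ) (hσ : 0 < σ) (hτ : 0 ≤ τ)
    (hστ : 1 ≤ σ * τ) (h : ν = μ ∨ ν ^ 2 - σ * (1 + μ * τ) * ν + μ * σ = 0) :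
    ν ≤ bfgsSpectralBound μ σ τ := by
  have hμτ : 0 < 1 + μ * τ := by positivity
  rcases h with rfl | hroot
  · have hdiv : ν / (1 + ν * τ) ≤ σ := by
      rw [div_le_iff₀ hμτ]
      nlinarith
    have hν : ν ≤ ν * (σ * τ) := le_mul_of_one_le_right hμ hστ
    rw [bfgsSpectralBound]
    linarith
  · have hD : μ * σ / (σ * (1 + μ * τ)) = μ / (1 + μ * τ) := by field_simp
    simpa [bfgsSpectralBound, hD] using
      le_sub_div_of_sq_sub_mul_add_eq_zero (by positivity) hroot

theorem bfgsSpectralBound_mono {μ σ τ σ' τ' : K} (hμ : 0 ≤ μ) (hσ : 0 ≤ σ) (hτ : 0 ≤ τ)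
    (hσσ' : σ ≤ σ') (hττ' : τ ≤ τ') :
    bfgsSpectralBound μ σ τ ≤ bfgsSpectralBound μ σ' τ' := by
  unfold bfgsSpectralBound
  gcongr
  exact hσ.trans hσσ'

end Quadratic

namespace Matrix

section DotProduct

variable {ι K : Type*} [Fintype ι] [Ring K] [LinearOrder K] [IsStrictOrderedRing K]

theorem dotProduct_self_nonneg (v : ι → K) : 0 ≤ v ⬝ᵥ v :=
  Fintype.sum_nonneg fun i => mul_self_nonneg (v i)

theorem dotProduct_self_pos {v : ι → K} (hv : v ≠ 0) : 0 < v ⬝ᵥ v :=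
  (dotProduct_self_nonneg v).lt_of_ne' (dotProduct_self_eq_zero.not.mpr hv)

end DotProduct

variable {ι : Type*} [Fintype ι] [DecidableEq ι]

section CommRing

variable {R : Type*} [CommRing R]

def bfgsInverseUpdate (μ ρ : R) (s y : ι → R) : Matrix ι ι R :=
  μ • ((1 - ρ • vecMulVec s y) * (1 - ρ • vecMulVec s y)ᵀ) + ρ • vecMulVec s s

theorem one_sub_smul_vecMulVec_mulVec (ρ : R) (u v w : ι → R) :
    (1 - ρ • vecMulVec u v) *ᵥ w = w - (ρ * (v ⬝ᵥ w)) • u := by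
  rw [sub_mulVec, one_mulVec, smul_mulVec, vecMulVec_mulVec, op_smul_eq_smul, smul_smul]

theorem bfgsInverseUpdate_mulVec (μ ρ : R) (s y w : ι → R) :
    bfgsInverseUpdate μ ρ s y *ᵥ w =
      μ • w - (μ * ρ * (s ⬝ᵥ w)) • y
        + (ρ * ((1 + μ * ρ * (y ⬝ᵥ y)) * (s ⬝ᵥ w) - μ * (y ⬝ᵥ w))) • s := by
  rw [bfgsInverseUpdate, transpose_sub, transpose_one, transpose_smul, transpose_vecMulVec,
    add_mulVec, smul_mulVec, smul_mulVec, ← mulVec_mulVec, one_sub_smul_vecMulVec_mulVec,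
    one_sub_smul_vecMulVec_mulVec, vecMulVec_mulVec, op_smul_eq_smul]
  simp only [dotProduct_sub, dotProduct_smul, smul_eq_mul, smul_sub, smul_smul]
  module

end CommRing

variable {K : Type*} [Field K]

theorem bfgsInverseUpdate_eigenvalue_eq_or_root {μ ρ ν : K} {s y w : ι → K}
    (hρ : ρ * (s ⬝ᵥ y) = 1) (hs : s ⬝ᵥ s ≠ 0) (hw : w ≠ 0)
    (hν : bfgsInverseUpdate μ ρ s y *ᵥ w = ν • w) :
    ν = μ ∨
      ν ^ 2 - ρ * (s ⬝ᵥ s) * (1 + μ * (ρ * (y ⬝ᵥ y))) * ν + μ * (ρ * (s ⬝ᵥ s)) = 0 := by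
  rw [bfgsInverseUpdate_mulVec] at hν
  have hy := congrArg (y ⬝ᵥ ·) hν
  have hs' := congrArg (s ⬝ᵥ ·) hν
  simp only [dotProduct_add, dotProduct_sub, dotProduct_smul, smul_eq_mul,
    dotProduct_comm y s] at hy hs'
  set a := s ⬝ᵥ w
  set b := y ⬝ᵥ w
  set c := ρ * ((1 + μ * ρ * (y ⬝ᵥ y)) * a - μ * b) with hc
  have hb : ν * b = a := by
    linear_combination -hy + ((1 + μ * ρ * (y ⬝ᵥ y)) * a - μ * b) * hρ
  have ha : ν * a = c * (s ⬝ᵥ s) := by linear_combination -hs' - μ * a * hρ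
  have hquad :
      a * (ν ^ 2 - ρ * (s ⬝ᵥ s) * (1 + μ * (ρ * (y ⬝ᵥ y))) * ν + μ * (ρ * (s ⬝ᵥ s))) = 0 := by
    linear_combination ν * ha + ν * (s ⬝ᵥ s) * hc - μ * ρ * (s ⬝ᵥ s) * hb
  rcases mul_eq_zero.mp hquad with ha0 | hroot
  · have hc0 : c = 0 := by simpa [ha0, hs] using ha.symm
    rw [ha0, hc0] at hν
    simp only [mul_zero, zero_smul, sub_zero, add_zero] at hν
    exact Or.inl (smul_left_injective K hw hν).symm
  · exact Or.inr hroot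

variable [LinearOrder K] [IsStrictOrderedRing K]

theorem bfgsInverseUpdate_eigenvalue_le {μ ρ γ L ν : K} {s y w : ι → K} (hγ : 0 < γ)
    (hμ : 0 ≤ μ) (hs : s ≠ 0) (hsy : γ * (s ⬝ᵥ s) ≤ s ⬝ᵥ y)
    (hy : y ⬝ᵥ y ≤ L ^ 2 * (s ⬝ᵥ s)) (hρ : ρ = 1 / (s ⬝ᵥ y)) (hw : w ≠ 0)
    (hν : bfgsInverseUpdate μ ρ s y *ᵥ w = ν • w) :
    ν ≤ bfgsSpectralBound μ (1 / γ) (L ^ 2 / γ) := by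
  have hS : 0 < s ⬝ᵥ s := dotProduct_self_pos hs
  have ht : 0 < s ⬝ᵥ y := (mul_pos hγ hS).trans_le hsy
  have hρt : ρ * (s ⬝ᵥ y) = 1 := by rw [hρ, one_div_mul_cancel ht.ne']
  have hρ0 : 0 < ρ := hρ ▸ one_div_pos.mpr ht
  have hσ0 : 0 < ρ * (s ⬝ᵥ s) := mul_pos hρ0 hS
  have hτ0 : 0 ≤ ρ * (y ⬝ᵥ y) := mul_nonneg hρ0.le (dotProduct_self_nonneg y)
  have hσ : ρ * (s ⬝ᵥ s) ≤ 1 / γ := by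
    rw [hρ, div_mul_eq_mul_div, one_mul, div_le_div_iff₀ ht hγ]
    linarith
  have hτ : ρ * (y ⬝ᵥ y) ≤ L ^ 2 / γ :=
    calc ρ * (y ⬝ᵥ y) ≤ ρ * (L ^ 2 * (s ⬝ᵥ s)) := by gcongr
      _ = L ^ 2 * (ρ * (s ⬝ᵥ s)) := by ring
      _ ≤ L ^ 2 * (1 / γ) := by gcongr
      _ = L ^ 2 / γ := by ring
  have hCS : (s ⬝ᵥ y) ^ 2 ≤ (s ⬝ᵥ s) * (y ⬝ᵥ y) := by
    simpa only [dotProduct, sq] using Finset.sum_mul_sq_le_sq_mul_sq Finset.univ s y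
  have hστ : 1 ≤ ρ * (s ⬝ᵥ s) * (ρ * (y ⬝ᵥ y)) :=
    calc (1 : K) = ρ ^ 2 * (s ⬝ᵥ y) ^ 2 := by rw [← mul_pow, hρt, one_pow]
      _ ≤ ρ ^ 2 * ((s ⬝ᵥ s) * (y ⬝ᵥ y)) := by gcongr
      _ = ρ * (s ⬝ᵥ s) * (ρ * (y ⬝ᵥ y)) := by ring
  calc ν ≤ bfgsSpectralBound μ (ρ * (s ⬝ᵥ s)) (ρ * (y ⬝ᵥ y)) :=
        le_bfgsSpectralBound hμ hσ0 hτ0 hστ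
          (bfgsInverseUpdate_eigenvalue_eq_or_root hρt hS.ne' hw hν)
    _ ≤ bfgsSpectralBound μ (1 / γ) (L ^ 2 / γ) :=
        bfgsSpectralBound_mono hμ hσ0.le hτ0 hσ hτ

end Matrix

theorem stmt_9_general {n : ℕ} (s y : Fin n → ℝ) (γ Ly μ ρ : ℝ)
    (hγ : 0 < γ) (hμ : 0 < μ) (hs : s ≠ 0)
    (hsy : s ⬝ᵥ y ≥ γ * (s ⬝ᵥ s))
    (hy : Real.sqrt (y ⬝ᵥ y) ≤ Ly * Real.sqrt (s ⬝ᵥ s))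
    (hρ : ρ = 1 / (s ⬝ᵥ y))
    (V A : Matrix (Fin n) (Fin n) ℝ)
    (hV : V = 1 - ρ • vecMulVec s y)
    (hA : A = μ • (V * Vᵀ) + ρ • vecMulVec s s)
    (hAh : A.IsHermitian) :
    ∀ i, hAh.eigenvalues i ≤
      1 / γ + max 0 ((μ / γ ^ 2) * Ly ^ 2 - μ / (1 + (μ / γ) * Ly ^ 2)) := by
  intro i
  have hy' : y ⬝ᵥ y ≤ Ly ^ 2 * (s ⬝ᵥ s) := by
    have hsq := pow_le_pow_left₀ (Real.sqrt_nonneg _) hy 2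
    rwa [mul_pow, Real.sq_sqrt (dotProduct_self_nonneg y),
      Real.sq_sqrt (dotProduct_self_nonneg s)] at hsq
  subst hA hV
  have hspec := hAh.eigenvalues_mem_spectrum_real i
  rw [← spectrum_toLin'] at hspec
  obtain ⟨w, hw⟩ := (Module.End.HasEigenvalue.of_mem_spectrum hspec).exists_hasEigenvector
  calc hAh.eigenvalues i ≤ bfgsSpectralBound μ (1 / γ) (Ly ^ 2 / γ) :=
        bfgsInverseUpdate_eigenvalue_le hγ hμ.le hs hsy hy' hρ hw.2
          ((toLin'_apply _ w).symm.trans hw.apply_eq_smul)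
    _ = 1 / γ + ((μ / γ ^ 2) * Ly ^ 2 - μ / (1 + (μ / γ) * Ly ^ 2)) := by
        rw [bfgsSpectralBound]
        field_simp
        ring
    _ ≤ 1 / γ + max 0 ((μ / γ ^ 2) * Ly ^ 2 - μ / (1 + (μ / γ) * Ly ^ 2)) := by
        gcongr
        exact le_max_right _ _

theorem stmt_9 {n : ℕ} (s y : Fin n → ℝ) (γ Ly μ ρ : ℝ)
    (hγ : 0 < γ) (hLy : 0 < Ly) (hμ : 0 < μ) (hs : s ≠ 0)
    (hsy : s ⬝ᵥ y ≥ γ * (s ⬝ᵥ s))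
    (hy : Real.sqrt (y ⬝ᵥ y) ≤ Ly * Real.sqrt (s ⬝ᵥ s))
    (hρ : ρ = 1 / (s ⬝ᵥ y))
    (V A : Matrix (Fin n) (Fin n) ℝ)
    (hV : V = 1 - ρ • vecMulVec s y)
    (hA : A = μ • (V * Vᵀ) + ρ • vecMulVec s s)
    (hAh : A.IsHermitian) :
    ∀ i, hAh.eigenvalues i ≤
      1 / γ + max 0 ((μ / γ ^ 2) * Ly ^ 2 - μ / (1 + (μ / γ) * Ly ^ 2)) :=
  stmt_9_general s y γ Ly μ ρ hγ hμ hs hsy hy hρ V A hV hA hAh
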